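/- arXiv:1302.2467 — 2 statements merged into one kernel-verified Lean document; each statement's English description precedes it below -/
import Mathlib

section
/- Let A be an n×n matrix over ℂ whose eigenvalues, counted with algebraic multiplicity, are μ₁, …, μₙ (i.e. the characteristic polynomial of A has root multiset {μ₁, …, μₙ}). Let B = 2A⊙Iₙ be the m×m matrix, m = n(n−1)/2, with rows and columns indexed by pairs (p,q) with n ≥ p > q ≥ 1, whose entries are given by: B_{(p,q),(r,s)} = −a_{ps} if r = q; a_{pr} if r ≠ p and s = q; a_{pp} + a_{qq} if r = p and s = q; a_{qs} if r = p and s ≠ q; −a_{qr} if s = p; and 0 otherwise. Then the eigenvalues of B, counted with algebraic multiplicity, are exactly the sums μ_p + μ_q for n ≥ p > q ≥ 1; i.e. the root multiset of the characteristic polynomial of B is {μ_p + μ_q : 1 ≤ q < p ≤ n}. -/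
/-- The index set of the bialternate product: pairs `(p, q)` with `p > q`. -/
def BialtIndex (n : ℕ) : Type := {pq : Fin n × Fin n // pq.2 < pq.1}

instance (n : ℕ) : Fintype (BialtIndex n) := by unfold BialtIndex; infer_instance
instance (n : ℕ) : DecidableEq (BialtIndex n) := by unfold BialtIndex; infer_instance

/-- The bialternate product `2A ⊙ Iₙ` of `2A` with the identity, an `m × m`
matrix with `m = n(n−1)/2`, rows indexed by `(p,q)`, `p > q`, and columns by
`(r,s)`, `r > s`, given by the entrywise case formula. -/
def bialt {n : ℕ} (A : Matrix (Fin n) (Fin n) ℂ) :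
    Matrix (BialtIndex n) (BialtIndex n) ℂ :=
  fun pq rs =>
    let p := pq.1.1; let q := pq.1.2; let r := rs.1.1; let s := rs.1.2
    if r = q then -A p s
    else if r ≠ p ∧ s = q then A p r
    else if r = p ∧ s = q then A p p + A q q
    else if r = p ∧ s ≠ q then A q s
    else if s = p then -A q r
    else 0

/-!
Write `x ∈ ℂ^m` as the skew-symmetric matrix `X` with `X p q = x (p, q) = -X q p` for `p > q`.
Then `2A ⊙ Iₙ` is the Lyapunov operator `X ↦ A X + X Aᵀ` on skew-symmetric matrices, and
replacing `A` by `U⁻¹ A U` conjugates this operator by the congruence `X ↦ U⁻¹ X U⁻ᵀ`; so the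
characteristic polynomial of `2A ⊙ Iₙ` only depends on the similarity class of `A`. By Schur
triangularisation we may take `A` upper triangular, and then `2A ⊙ Iₙ` is upper triangular for
the lexicographic order on pairs, with diagonal entries `a_pp + a_qq`. Finally, the multiset of
the sums `μ_p + μ_q`, `p > q`, is the multiset of sums of the two-element submultisets of
`{μ₁, …, μₙ}`, so it only depends on the root multiset of the characteristic polynomial of `A`.
-/

open Matrix Polynomial

lemma Polynomial.roots_prod_univ_X_sub_C {ι R : Type*} [Fintype ι] [CommRing R] [IsDomain R]
    (f : ι → R) : (∏ i, (X - C (f i))).roots = Finset.univ.val.map f := by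
  rw [Finset.prod_eq_multiset_prod, ← roots_multiset_prod_X_sub_C (Finset.univ.val.map f),
    Multiset.map_map]
  rfl

namespace Matrix

section Triangularization

variable {R K : Type*} [CommRing R] [Field K]

def extendByOne {m : ℕ} (M : Matrix (Fin m) (Fin m) R) : Matrix (Fin (m + 1)) (Fin (m + 1)) R :=
  of (Fin.cons (Fin.cons 1 0) fun i => Fin.cons 0 (M i))

@[simp] lemma extendByOne_zero_zero {m : ℕ} (M : Matrix (Fin m) (Fin m) R) :
    extendByOne M 0 0 = 1 := rfl

@[simp] lemma extendByOne_zero_succ {m : ℕ} (M : Matrix (Fin m) (Fin m) R) (j : Fin m) :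
    extendByOne M 0 j.succ = 0 := rfl

@[simp] lemma extendByOne_succ_zero {m : ℕ} (M : Matrix (Fin m) (Fin m) R) (i : Fin m) :
    extendByOne M i.succ 0 = 0 := rfl

@[simp] lemma extendByOne_succ_succ {m : ℕ} (M : Matrix (Fin m) (Fin m) R) (i j : Fin m) :
    extendByOne M i.succ j.succ = M i j := rfl

@[simps]
def extendByOneHom (m : ℕ) :
    Matrix (Fin m) (Fin m) R →* Matrix (Fin (m + 1)) (Fin (m + 1)) R where
  toFun := extendByOne
  map_one' := by
    ext i j
    cases i using Fin.cases <;> cases j using Fin.cases <;>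
      simp [one_apply, (Fin.succ_ne_zero _).symm]
  map_mul' M N := by
    ext i j
    cases i using Fin.cases <;> cases j using Fin.cases <;> simp [mul_apply, Fin.sum_univ_succ]

lemma extendByOne_inv {m : ℕ} {M : Matrix (Fin m) (Fin m) R} (hM : IsUnit M) :
    (extendByOne M)⁻¹ = extendByOne M⁻¹ := by
  refine inv_eq_left_inv ?_
  rw [← extendByOneHom_apply, ← extendByOneHom_apply, ← map_mul,
    nonsing_inv_mul M ((isUnit_iff_isUnit_det M).mp hM), map_one]

lemma extendByOne_mul_mul_extendByOne_apply_succ_zero {m : ℕ} (M N : Matrix (Fin m) (Fin m) R)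
    {B : Matrix (Fin (m + 1)) (Fin (m + 1)) R} (hB : ∀ k : Fin m, B k.succ 0 = 0) (i : Fin m) :
    (extendByOne M * B * extendByOne N) i.succ 0 = 0 := by
  simp [mul_apply, Fin.sum_univ_succ, hB]

lemma submatrix_succ_extendByOne_mul_mul_extendByOne {m : ℕ} (M N : Matrix (Fin m) (Fin m) R)
    {B : Matrix (Fin (m + 1)) (Fin (m + 1)) R} (hB : ∀ k : Fin m, B k.succ 0 = 0) :
    (extendByOne M * B * extendByOne N).submatrix Fin.succ Fin.succ
      = M * B.submatrix Fin.succ Fin.succ * N := by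
  ext i j
  simp [mul_apply, Fin.sum_univ_succ, hB, Finset.sum_mul]

lemma isUpperTriangular_of_succ {m : ℕ} {M : Matrix (Fin (m + 1)) (Fin (m + 1)) R}
    (h0 : ∀ i : Fin m, M i.succ 0 = 0) (h : (M.submatrix Fin.succ Fin.succ).IsUpperTriangular) :
    M.IsUpperTriangular := by
  intro i j hji
  cases i using Fin.cases with
  | zero => exact absurd hji (Fin.not_lt_zero j)
  | succ i =>
    cases j using Fin.cases with
    | zero => exact h0 i
    | succ j => exact h (Fin.succ_lt_succ_iff.mp hji)

lemma inv_mul_mul_apply_succ_zero {m : ℕ} {A P : Matrix (Fin (m + 1)) (Fin (m + 1)) R}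
    {v : Fin (m + 1) → R} {μ : R} (hAv : A *ᵥ v = μ • v) (hP : IsUnit P)
    (hPv : P *ᵥ Pi.single 0 1 = v) (k : Fin m) : (P⁻¹ * A * P) k.succ 0 = 0 := by
  have h : (P⁻¹ * A * P) *ᵥ Pi.single 0 1 = μ • Pi.single 0 1 := by
    rw [← mulVec_mulVec, ← mulVec_mulVec, hPv, hAv, mulVec_smul, ← hPv, mulVec_mulVec,
      nonsing_inv_mul P ((isUnit_iff_isUnit_det P).mp hP), one_mulVec]
  simpa [mulVec_single, Fin.succ_ne_zero] using congrFun h k.succ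

lemma exists_isUnit_mulVec_single_zero {m : ℕ} {v : Fin (m + 1) → K} (hv : v ≠ 0) :
    ∃ P : Matrix (Fin (m + 1)) (Fin (m + 1)) K, IsUnit P ∧ P *ᵥ Pi.single 0 1 = v := by
  obtain ⟨i, hi⟩ := Function.ne_iff.mp hv
  refine ⟨((1 : Matrix (Fin (m + 1)) (Fin (m + 1)) K).updateCol i v).submatrix id
    (Equiv.swap 0 i), ?_, ?_⟩
  · rw [isUnit_iff_isUnit_det, det_permute', ← cramer_apply, cramer_one]
    exact ((Units.isUnit _).map (Int.castRingHom K)).mul (isUnit_iff_ne_zero.mpr hi)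
  · ext k
    simp [mulVec_single]

theorem exists_isUpperTriangular_inv_mul_mul [IsAlgClosed K] :
    ∀ {n : ℕ} (A : Matrix (Fin n) (Fin n) K),
      ∃ U : Matrix (Fin n) (Fin n) K, IsUnit U ∧ (U⁻¹ * A * U).IsUpperTriangular
  | 0, _ => ⟨1, isUnit_one, fun i => i.elim0⟩
  | m + 1, A => by
    obtain ⟨μ, hμ⟩ := Module.End.exists_eigenvalue (toLin' A)
    obtain ⟨v, hv, hv0⟩ := hμ.exists_hasEigenvector
    obtain ⟨P, hP, hPv⟩ := exists_isUnit_mulVec_single_zero hv0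
    set B := P⁻¹ * A * P
    have hB : ∀ k : Fin m, B k.succ 0 = 0 :=
      inv_mul_mul_apply_succ_zero (Module.End.mem_eigenspace_iff.mp hv) hP hPv
    obtain ⟨V, hV, hVB⟩ := exists_isUpperTriangular_inv_mul_mul (B.submatrix Fin.succ Fin.succ)
    refine ⟨P * extendByOne V, hP.mul (hV.map (extendByOneHom m)), ?_⟩
    have hconj : (P * extendByOne V)⁻¹ * A * (P * extendByOne V)
        = extendByOne V⁻¹ * B * extendByOne V := by
      rw [mul_inv_rev, extendByOne_inv hV]
      simp only [B, Matrix.mul_assoc]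
    rw [hconj]
    exact isUpperTriangular_of_succ (extendByOne_mul_mul_extendByOne_apply_succ_zero _ _ hB)
      (by rwa [submatrix_succ_extendByOne_mul_mul_extendByOne _ _ hB])

end Triangularization

section SkewSymmetric

variable {ι R : Type*} [Fintype ι] [DecidableEq ι] [CommRing R]

lemma mem_skewAdjointMatricesSubmodule_one {X : Matrix ι ι R} :
    X ∈ skewAdjointMatricesSubmodule (1 : Matrix ι ι R) ↔ Xᵀ = -X := by
  simp [Matrix.IsSkewAdjoint, Matrix.IsAdjointPair]

lemma ext_of_mem_skewAdjoint_of_lt [LinearOrder ι] [NoZeroDivisors R] [CharZero R]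
    {X Y : Matrix ι ι R}
    (hX : X ∈ skewAdjointMatricesSubmodule (1 : Matrix ι ι R))
    (hY : Y ∈ skewAdjointMatricesSubmodule (1 : Matrix ι ι R))
    (h : ∀ i j, j < i → X i j = Y i j) : X = Y := by
  rw [mem_skewAdjointMatricesSubmodule_one] at hX hY
  have hX' := congr_fun₂ hX
  have hY' := congr_fun₂ hY
  simp only [transpose_apply, Matrix.neg_apply] at hX' hY'
  ext i j
  rcases lt_trichotomy j i with hji | rfl | hij
  · exact h i j hji
  · rw [CharZero.eq_neg_self_iff.mp (hX' j j), CharZero.eq_neg_self_iff.mp (hY' j j)]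
  · rw [← neg_neg (X i j), ← hX', h j i hij, hY', neg_neg]

def lyapunovMap (A : Matrix ι ι R) : Matrix ι ι R →ₗ[R] Matrix ι ι R :=
  LinearMap.mulLeft R A + LinearMap.mulRight R Aᵀ

@[simp] lemma lyapunovMap_apply (A X : Matrix ι ι R) : lyapunovMap A X = A * X + X * Aᵀ := rfl

lemma lyapunovMap_mem_skewAdjoint (A : Matrix ι ι R) {X : Matrix ι ι R}
    (hX : X ∈ skewAdjointMatricesSubmodule (1 : Matrix ι ι R)) :
    lyapunovMap A X ∈ skewAdjointMatricesSubmodule (1 : Matrix ι ι R) := by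
  rw [mem_skewAdjointMatricesSubmodule_one] at hX ⊢
  simp [transpose_add, transpose_mul, hX, add_comm]

def congrMap (V : Matrix ι ι R) : Matrix ι ι R →ₗ[R] Matrix ι ι R :=
  LinearMap.mulLeft R V ∘ₗ LinearMap.mulRight R Vᵀ

@[simp] lemma congrMap_apply (V X : Matrix ι ι R) : congrMap V X = V * (X * Vᵀ) := rfl

lemma congrMap_mem_skewAdjoint (V : Matrix ι ι R) {X : Matrix ι ι R}
    (hX : X ∈ skewAdjointMatricesSubmodule (1 : Matrix ι ι R)) :
    congrMap V X ∈ skewAdjointMatricesSubmodule (1 : Matrix ι ι R) := by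
  rw [mem_skewAdjointMatricesSubmodule_one] at hX ⊢
  simp [transpose_mul, hX, Matrix.mul_assoc]

lemma congrMap_mul (V W : Matrix ι ι R) : congrMap (V * W) = congrMap V ∘ₗ congrMap W := by
  ext X : 1
  simp [transpose_mul, Matrix.mul_assoc]

lemma congrMap_congrMap {V W : Matrix ι ι R} (h : V * W = 1) (X : Matrix ι ι R) :
    congrMap V (congrMap W X) = X := by
  rw [← LinearMap.comp_apply, ← congrMap_mul, h]
  simp

def skewCongr {V W : Matrix ι ι R} (h : V * W = 1) (h' : W * V = 1) :
    skewAdjointMatricesSubmodule (1 : Matrix ι ι R) ≃ₗ[R]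
      skewAdjointMatricesSubmodule (1 : Matrix ι ι R) :=
  LinearEquiv.ofLinearMap (f := (congrMap V).restrict fun _ => congrMap_mem_skewAdjoint V)
    (g := (congrMap W).restrict fun _ => congrMap_mem_skewAdjoint W)
    (by ext X : 2; exact congrMap_congrMap h X)
    (by ext X : 2; exact congrMap_congrMap h' X)

@[simp] lemma coe_skewCongr_apply {V W : Matrix ι ι R} (h : V * W = 1) (h' : W * V = 1)
    (X : skewAdjointMatricesSubmodule (1 : Matrix ι ι R)) :
    (skewCongr h h' X : Matrix ι ι R) = congrMap V X := rfl

@[simp] lemma coe_skewCongr_symm_apply {V W : Matrix ι ι R} (h : V * W = 1) (h' : W * V = 1)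
    (X : skewAdjointMatricesSubmodule (1 : Matrix ι ι R)) :
    ((skewCongr h h').symm X : Matrix ι ι R) = congrMap W X := rfl

lemma lyapunovMap_restrict_mul_mul {V W : Matrix ι ι R} (h : V * W = 1) (h' : W * V = 1)
    (A : Matrix ι ι R) :
    (lyapunovMap (V * A * W)).restrict (fun _ => lyapunovMap_mem_skewAdjoint (V * A * W))
      = (skewCongr h h').conj
          ((lyapunovMap A).restrict fun _ => lyapunovMap_mem_skewAdjoint A) := by
  have hT : Wᵀ * Vᵀ = 1 := by rw [← transpose_mul, h, transpose_one]
  ext X : 2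
  simp only [LinearMap.restrict_apply, LinearEquiv.conj_apply, lyapunovMap_apply,
    LinearMap.comp_apply, LinearEquiv.coe_coe, coe_skewCongr_apply, coe_skewCongr_symm_apply,
    congrMap_apply, transpose_mul, Matrix.mul_add, Matrix.add_mul]
  congr 1
  · simp only [Matrix.mul_assoc, hT, Matrix.mul_one]
  · simp only [← Matrix.mul_assoc, h, Matrix.one_mul]

end SkewSymmetric

end Matrix

namespace BialtIndex

variable {n : ℕ}

abbrev mk (i j : Fin n) (h : j < i) : BialtIndex n := ⟨(i, j), h⟩

lemma mk_eq_iff {i j : Fin n} (h : j < i) (pq : BialtIndex n) :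
    mk i j h = pq ↔ pq.1.1 = i ∧ pq.1.2 = j := by
  constructor
  · rintro rfl
    exact ⟨rfl, rfl⟩
  · rintro ⟨rfl, rfl⟩
    rfl

instance : LinearOrder (BialtIndex n) :=
  LinearOrder.lift' (fun pq => toLex pq.1) fun _ _ h => Subtype.ext (toLex.injective h)

lemma lt_iff {pq rs : BialtIndex n} :
    pq < rs ↔ pq.1.1 < rs.1.1 ∨ pq.1.1 = rs.1.1 ∧ pq.1.2 < rs.1.2 :=
  Prod.Lex.toLex_lt_toLex

lemma pair_injective :
    Function.Injective fun pq : BialtIndex n => ({pq.1.1, pq.1.2} : Multiset (Fin n)) := by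
  intro pq rs (h : ({pq.1.1, pq.1.2} : Multiset (Fin n)) = {rs.1.1, rs.1.2})
  have hp : pq.1.1 ∈ ({rs.1.1, rs.1.2} : Multiset (Fin n)) := by simp [← h]
  have hq : pq.1.2 ∈ ({rs.1.1, rs.1.2} : Multiset (Fin n)) := by simp [← h]
  have hpq : pq.1.2 < pq.1.1 := pq.2
  have hrs : rs.1.2 < rs.1.1 := rs.2
  simp only [Multiset.insert_eq_cons, Multiset.mem_cons, Multiset.mem_singleton] at hp hq
  apply Subtype.ext
  apply Prod.ext <;> grind

lemma map_pair_univ :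
    Finset.univ.val.map (fun pq : BialtIndex n => ({pq.1.1, pq.1.2} : Multiset (Fin n)))
      = Multiset.powersetCard 2 Finset.univ.val := by
  refine (Multiset.Nodup.ext (Finset.univ.nodup.map pair_injective)
    Finset.univ.nodup.powersetCard).mpr fun s => ?_
  simp only [Multiset.mem_map, Finset.mem_val, Finset.mem_univ, true_and,
    Multiset.mem_powersetCard]
  constructor
  · rintro ⟨pq, rfl⟩
    refine ⟨(Multiset.le_iff_subset ?_).mpr fun x _ => Finset.mem_univ_val x, by simp⟩
    simp [pq.2.ne']
  · rintro ⟨hle, hcard⟩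
    obtain ⟨a, b, rfl⟩ := Multiset.card_eq_two.mp hcard
    have hab : a ≠ b := by simpa using Multiset.nodup_of_le hle Finset.univ.nodup
    rcases hab.lt_or_gt with h | h
    · exact ⟨mk b a h, Multiset.pair_comm _ _⟩
    · exact ⟨mk a b h, rfl⟩

lemma map_univ_add_eq_map_sum_powersetCard {M : Type*} [AddCommMonoid M] (μ : Fin n → M) :
    Finset.univ.val.map (fun pq : BialtIndex n => μ pq.1.1 + μ pq.1.2)
      = (Multiset.powersetCard 2 (Finset.univ.val.map μ)).map Multiset.sum := by
  rw [Multiset.powersetCard_map, ← map_pair_univ, Multiset.map_map, Multiset.map_map]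
  simp

variable {R : Type*} [CommRing R]

def toSkew : (BialtIndex n → R) →ₗ[R] Matrix (Fin n) (Fin n) R where
  toFun x := of fun i j =>
    if h : j < i then x (mk i j h) else if h' : i < j then -x (mk j i h') else 0
  map_add' x y := by
    ext i j
    simp only [of_apply, Matrix.add_apply]
    split_ifs <;> simp only [Pi.add_apply, neg_add, add_zero]
  map_smul' c x := by
    ext i j
    simp only [of_apply, Matrix.smul_apply, smul_eq_mul, RingHom.id_apply]
    split_ifs <;> simp only [Pi.smul_apply, smul_eq_mul, mul_neg, mul_zero]

lemma toSkew_apply_of_lt (x : BialtIndex n → R) {i j : Fin n} (h : j < i) :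
    toSkew x i j = x (mk i j h) := by
  simp [toSkew, h]

lemma toSkew_mem (x : BialtIndex n → R) :
    toSkew x ∈ skewAdjointMatricesSubmodule (1 : Matrix (Fin n) (Fin n) R) := by
  rw [mem_skewAdjointMatricesSubmodule_one]
  ext i j
  rcases lt_trichotomy i j with h | rfl | h
  · simp [toSkew, h, h.not_gt]
  · simp [toSkew]
  · simp [toSkew, h, h.not_gt]

lemma toSkew_single (pq : BialtIndex n) (c : R) :
    toSkew (Pi.single pq c) = c • (single pq.1.1 pq.1.2 1 - single pq.1.2 pq.1.1 1) := by
  have hpq : pq.1.2 < pq.1.1 := pq.2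
  ext i j
  rcases lt_trichotomy j i with h | rfl | h
  · have : ¬(pq.1.2 = i ∧ pq.1.1 = j) := fun ⟨hq, hp⟩ => (hq ▸ hp ▸ hpq).asymm h
    simp [toSkew, h, Pi.single_apply, single_apply, mk_eq_iff, this]
  · simp [toSkew, single_apply]
    grind
  · have : ¬(pq.1.1 = i ∧ pq.1.2 = j) := fun ⟨hp, hq⟩ => (hq ▸ hp ▸ hpq).asymm h
    simp [toSkew, h, h.not_gt, Pi.single_apply, single_apply, mk_eq_iff, this, and_comm]

def skewEquiv [NoZeroDivisors R] [CharZero R] :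
    (BialtIndex n → R) ≃ₗ[R] skewAdjointMatricesSubmodule (1 : Matrix (Fin n) (Fin n) R) where
  toFun x := ⟨toSkew x, toSkew_mem x⟩
  map_add' x y := Subtype.ext (map_add toSkew x y)
  map_smul' c x := Subtype.ext (map_smul toSkew c x)
  invFun X pq := (X : Matrix (Fin n) (Fin n) R) pq.1.1 pq.1.2
  left_inv x := funext fun pq => toSkew_apply_of_lt x pq.2
  right_inv X := Subtype.ext <| ext_of_mem_skewAdjoint_of_lt (toSkew_mem _) X.2
    fun _ _ h => toSkew_apply_of_lt _ h

end BialtIndex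

open BialtIndex

section Bialt

variable {n : ℕ}

/-- `bialt A (p, q) (r, s)` is the coefficient of `X r s` in `(A X + X Aᵀ) p q`. -/
lemma bialt_apply (A : Matrix (Fin n) (Fin n) ℂ) (pq rs : BialtIndex n) :
    bialt A pq rs =
      (if rs.1.2 = pq.1.2 then A pq.1.1 rs.1.1 else 0)
      - (if rs.1.1 = pq.1.2 then A pq.1.1 rs.1.2 else 0)
      + (if rs.1.1 = pq.1.1 then A pq.1.2 rs.1.2 else 0)
      - (if rs.1.2 = pq.1.1 then A pq.1.2 rs.1.1 else 0) := by
  obtain ⟨⟨p, q⟩, hpq : q < p⟩ := pq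
  obtain ⟨⟨r, s⟩, hrs : s < r⟩ := rs
  simp only [bialt]
  grind

lemma bialt_apply_self (A : Matrix (Fin n) (Fin n) ℂ) (pq : BialtIndex n) :
    bialt A pq pq = A pq.1.1 pq.1.1 + A pq.1.2 pq.1.2 := by
  simp [bialt, pq.2.ne']

lemma toSkew_bialt_mulVec (A : Matrix (Fin n) (Fin n) ℂ) (x : BialtIndex n → ℂ) :
    toSkew (bialt A *ᵥ x) = lyapunovMap A (toSkew x) := by
  suffices h : toSkew ∘ₗ toLin' (bialt A) = lyapunovMap A ∘ₗ toSkew from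
    LinearMap.congr_fun h x
  refine LinearMap.pi_ext fun pq c => ?_
  refine ext_of_mem_skewAdjoint_of_lt (toSkew_mem _)
    (lyapunovMap_mem_skewAdjoint A (toSkew_mem _)) fun i j h => ?_
  simp only [LinearMap.comp_apply, toLin'_apply, mulVec_single, toSkew_apply_of_lt _ h,
    toSkew_single, Pi.smul_apply, col_apply, bialt_apply]
  simp [mul_apply, single_apply, mul_sub, sub_mul, ite_and]
  split_ifs <;> ring

lemma toLin'_bialt (A : Matrix (Fin n) (Fin n) ℂ) :
    toLin' (bialt A)
      = skewEquiv.symm.conj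
          ((lyapunovMap A).restrict fun _ => lyapunovMap_mem_skewAdjoint A) := by
  refine LinearMap.ext fun x => skewEquiv.injective ?_
  simp only [LinearEquiv.conj_apply, LinearMap.comp_apply, LinearEquiv.coe_coe,
    LinearEquiv.apply_symm_apply, LinearEquiv.symm_symm, toLin'_apply]
  exact Subtype.ext (toSkew_bialt_mulVec A x)

lemma charpoly_bialt (A : Matrix (Fin n) (Fin n) ℂ) :
    (bialt A).charpoly
      = ((lyapunovMap A).restrict fun _ => lyapunovMap_mem_skewAdjoint A).charpoly := by
  rw [← charpoly_toLin', toLin'_bialt, LinearEquiv.charpoly_conj]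

lemma charpoly_bialt_inv_mul_mul {U : Matrix (Fin n) (Fin n) ℂ} (hU : IsUnit U)
    (A : Matrix (Fin n) (Fin n) ℂ) : (bialt (U⁻¹ * A * U)).charpoly = (bialt A).charpoly := by
  have hdet := (isUnit_iff_isUnit_det U).mp hU
  rw [charpoly_bialt, charpoly_bialt,
    lyapunovMap_restrict_mul_mul (nonsing_inv_mul U hdet) (mul_nonsing_inv U hdet),
    LinearEquiv.charpoly_conj]

lemma bialt_isUpperTriangular {T : Matrix (Fin n) (Fin n) ℂ} (hT : T.IsUpperTriangular) :
    (bialt T).IsUpperTriangular := by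
  intro pq rs h
  have hT' : ∀ a b, b < a → T a b = 0 := fun a b h => hT h
  have hpq : pq.1.2 < pq.1.1 := pq.2
  have hrs : rs.1.2 < rs.1.1 := rs.2
  rw [bialt_apply]
  have := BialtIndex.lt_iff.mp h
  grind

lemma charpoly_bialt_of_isUpperTriangular {T : Matrix (Fin n) (Fin n) ℂ}
    (hT : T.IsUpperTriangular) :
    (bialt T).charpoly = ∏ pq : BialtIndex n, (X - C (T pq.1.1 pq.1.1 + T pq.1.2 pq.1.2)) := by
  simp only [charpoly_of_isUpperTriangular _ (bialt_isUpperTriangular hT), bialt_apply_self]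

end Bialt

/-- If the eigenvalues of the `n × n` complex matrix `A`, counted with algebraic
multiplicity (i.e. the root multiset of its characteristic polynomial), are
`μ₁, …, μₙ`, then the eigenvalues of the bialternate product `2A ⊙ Iₙ`, counted
with algebraic multiplicity, are exactly the sums `μ_p + μ_q` for `p > q`. -/
theorem bialt_charpoly_roots
    {n : ℕ} (A : Matrix (Fin n) (Fin n) ℂ) (μ : Fin n → ℂ)
    (hroots : A.charpoly.roots = Multiset.map μ (Finset.univ.val : Multiset (Fin n))) :
    (bialt A).charpoly.roots
      = Multiset.map (fun pq : BialtIndex n => μ pq.1.1 + μ pq.1.2)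
          (Finset.univ.val : Multiset (BialtIndex n)) := by
  obtain ⟨U, hU, hT⟩ := exists_isUpperTriangular_inv_mul_mul A
  have hdiag : Finset.univ.val.map (fun i => (U⁻¹ * A * U) i i) = Finset.univ.val.map μ := by
    rw [← hroots, ← charpoly_units_conj' hU.unit A, IsUnit.unit_spec,
      charpoly_of_isUpperTriangular _ hT, roots_prod_univ_X_sub_C]
  rw [← charpoly_bialt_inv_mul_mul hU, charpoly_bialt_of_isUpperTriangular hT,
    roots_prod_univ_X_sub_C, map_univ_add_eq_map_sum_powersetCard (fun i => (U⁻¹ * A * U) i i),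
    hdiag, map_univ_add_eq_map_sum_powersetCard]
end

section
/- Let A be an n×n matrix over ℂ with eigenvalues μ₁, …, μₙ counted with algebraic multiplicity. Then det(2A⊙Iₙ) = 0 if and only if there exist indices p > q with μ_p + μ_q = 0. In particular, det(2A⊙Iₙ) = 0 whenever A has a pair of purely imaginary conjugate eigenvalues ±iβ with β ∈ ℝ, and also whenever A has a pair of real eigenvalues of opposite sign and equal modulus; hence the vanishing of the Hopf test function ψ_H(A) = det(2A⊙Iₙ) alone does not certify a pair of purely imaginary complex-conjugate eigenvalues. -/
/-!
Triangularize `A = P U P⁻¹`. The matrix `bialt A` is the action of the Kronecker sum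
`A ⊗ 1 + 1 ⊗ A` on `⋀² ℂⁿ` in the basis `e_p ∧ e_q`, `p > q`, so conjugating `A` by `P`
conjugates `bialt A` by the second compound matrix of `P`, and the determinant does not change.
For upper triangular `U`, `bialt U` is upper triangular in the lexicographic order on pairs, with
diagonal entries `U_pp + U_qq`; and the diagonal of `U` lists the eigenvalues of `A`.
-/

open Matrix Kronecker

namespace Matrix

section Triangularization

variable {R K : Type*} [CommRing R] [Field K]

theorem det_one_updateCol {ι : Type*} [Fintype ι] [DecidableEq ι] (j : ι) (v : ι → R) :
    ((1 : Matrix ι ι R).updateCol j v).det = v j := by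
  simpa [one_apply] using det_updateCol_sum (1 : Matrix ι ι R) j v

theorem exists_units_mulVec_single_eq {ι : Type*} [Fintype ι] [DecidableEq ι] {v : ι → K}
    (hv : v ≠ 0) (j : ι) : ∃ P : (Matrix ι ι K)ˣ, P.val *ᵥ Pi.single j 1 = v := by
  obtain ⟨i, hi⟩ := Function.ne_iff.mp hv
  set P := ((1 : Matrix ι ι K).updateCol i v).submatrix id (Equiv.swap j i)
  have hP : IsUnit P := by
    rw [isUnit_iff_isUnit_det, det_permute', det_one_updateCol]
    exact ((Equiv.Perm.sign _).isUnit.map (Int.castRingHom K)).mul (isUnit_iff_ne_zero.mpr hi)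
  exact ⟨hP.unit, funext fun k => by simp [P]⟩

theorem units_conj_mulVec_eq_smul {ι : Type*} [Fintype ι] [DecidableEq ι]
    {A : Matrix ι ι R} {P : (Matrix ι ι R)ˣ} {x : ι → R} {μ : R}
    (hA : A *ᵥ (P.val *ᵥ x) = μ • (P.val *ᵥ x)) :
    (P⁻¹.val * A * P.val) *ᵥ x = μ • x := by
  rw [← mulVec_mulVec, ← mulVec_mulVec, hA, mulVec_smul, mulVec_mulVec, Units.inv_mul,
    one_mulVec]

variable {S : Type*} [Semiring S] {n : ℕ}

def blockDiagOne (X : Matrix (Fin n) (Fin n) S) : Matrix (Fin (n + 1)) (Fin (n + 1)) S :=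
  of (Fin.cons (Fin.cons 1 0) fun i => Fin.cons 0 (X i))

@[simp] theorem blockDiagOne_zero_zero (X : Matrix (Fin n) (Fin n) S) :
    blockDiagOne X 0 0 = 1 := rfl

@[simp] theorem blockDiagOne_zero_succ (X : Matrix (Fin n) (Fin n) S) (j : Fin n) :
    blockDiagOne X 0 j.succ = 0 := rfl

@[simp] theorem blockDiagOne_succ_zero (X : Matrix (Fin n) (Fin n) S) (i : Fin n) :
    blockDiagOne X i.succ 0 = 0 := rfl

@[simp] theorem blockDiagOne_succ_succ (X : Matrix (Fin n) (Fin n) S) (i j : Fin n) :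
    blockDiagOne X i.succ j.succ = X i j := rfl

def blockDiagOneHom : Matrix (Fin n) (Fin n) S →* Matrix (Fin (n + 1)) (Fin (n + 1)) S where
  toFun := blockDiagOne
  map_one' := by
    ext i j
    cases i using Fin.cases <;> cases j using Fin.cases <;>
      simp [one_apply, eq_comm, Fin.succ_ne_zero]
  map_mul' X Y := by
    ext i j
    cases i using Fin.cases <;> cases j using Fin.cases <;> simp [mul_apply, Fin.sum_univ_succ]

theorem isUpperTriangular_blockDiagOne_mul_mul {B : Matrix (Fin (n + 1)) (Fin (n + 1)) S}
    {X Y : Matrix (Fin n) (Fin n) S} (hB : ∀ i : Fin n, B i.succ 0 = 0)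
    (hXY : (X * B.submatrix Fin.succ Fin.succ * Y).IsUpperTriangular) :
    (blockDiagOne X * B * blockDiagOne Y).IsUpperTriangular := by
  intro i j hji
  cases i using Fin.cases with
  | zero => exact absurd hji (Fin.not_lt_zero _)
  | succ i =>
    cases j using Fin.cases with
    | zero => simp [mul_apply, Fin.sum_univ_succ, hB]
    | succ j => simpa [mul_apply, Fin.sum_univ_succ] using hXY (Fin.succ_lt_succ_iff.mp hji)

theorem exists_isUpperTriangular_units_conj [IsAlgClosed K] :
    ∀ {n : ℕ} (A : Matrix (Fin n) (Fin n) K),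
      ∃ P : (Matrix (Fin n) (Fin n) K)ˣ, (P⁻¹.val * A * P.val).IsUpperTriangular
  | 0, _ => ⟨1, fun i => i.elim0⟩
  | n + 1, A => by
    obtain ⟨μ, hμ⟩ := Module.End.exists_eigenvalue (toLin' A)
    obtain ⟨v, hv⟩ := hμ.exists_hasEigenvector
    obtain ⟨P, hPv⟩ := exists_units_mulVec_single_eq hv.2 0
    set B := P⁻¹.val * A * P.val
    have hB : B *ᵥ Pi.single 0 1 = μ • Pi.single 0 1 :=
      units_conj_mulVec_eq_smul (by simpa [hPv] using hv.apply_eq_smul)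
    have hB0 : ∀ i : Fin n, B i.succ 0 = 0 := fun i => by
      simpa [Fin.succ_ne_zero] using congrFun hB i.succ
    obtain ⟨Q, hQ⟩ := exists_isUpperTriangular_units_conj (B.submatrix Fin.succ Fin.succ)
    refine ⟨P * Units.map blockDiagOneHom Q, ?_⟩
    have hconj : ((P * Units.map blockDiagOneHom Q)⁻¹).val * A
        * (P * Units.map blockDiagOneHom Q).val
          = blockDiagOne Q⁻¹.val * B * blockDiagOne Q.val := by
      simp [B, blockDiagOneHom, Matrix.mul_assoc]
    rw [hconj]
    exact isUpperTriangular_blockDiagOne_mul_mul hB0 hQ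

end Triangularization

theorem IsUpperTriangular.charpoly_roots {R ι : Type*} [CommRing R] [IsDomain R] [Fintype ι]
    [LinearOrder ι] {M : Matrix ι ι R} (hM : M.IsUpperTriangular) :
    M.charpoly.roots = Finset.univ.val.map M.diag := by
  rw [charpoly_of_isUpperTriangular M hM, Finset.prod_eq_multiset_prod,
    show (fun i => Polynomial.X - Polynomial.C (M i i))
      = (fun a => Polynomial.X - Polynomial.C a) ∘ M.diag from rfl,
    ← Multiset.map_map, Polynomial.roots_multiset_prod_X_sub_C]

end Matrix

section Compound

variable {R : Type*} [CommRing R] {n : ℕ}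

theorem sum_prod_fin_eq_sum_bialtIndex {M : Type*} [AddCommMonoid M] (f : Fin n × Fin n → M) :
    ∑ w, f w = ∑ z : BialtIndex n, (f z.1 + f z.1.swap) + ∑ i, f (i, i) := by
  have hlt (g : Fin n × Fin n → M) :
      ∑ w ∈ Finset.univ.filter (fun w : Fin n × Fin n => w.2 < w.1), g w
        = ∑ z : BialtIndex n, g z.1 :=
    Finset.sum_subtype _ (by simp) g
  have hgt : ∑ w ∈ Finset.univ.filter (fun w : Fin n × Fin n => w.1 < w.2), f w
      = ∑ w ∈ Finset.univ.filter (fun w : Fin n × Fin n => w.2 < w.1), f w.swap :=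
    Finset.sum_nbij' Prod.swap Prod.swap (by simp) (by simp) (by simp) (by simp) (by simp)
  have hdiag : ∑ w ∈ Finset.univ.filter (fun w : Fin n × Fin n => w.1 = w.2), f w
      = ∑ i, f (i, i) :=
    Finset.sum_nbij' Prod.fst (fun i => (i, i)) (by simp) (by simp)
      (by rintro ⟨i, j⟩ h; simp_all) (by simp) (by rintro ⟨i, j⟩ h; simp_all)
  have htri : ∀ w : Fin n × Fin n, f w = (if w.2 < w.1 then f w else 0)
      + (if w.1 < w.2 then f w else 0) + (if w.1 = w.2 then f w else 0) := by
    rintro ⟨i, j⟩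
    rcases lt_trichotomy i j with h | rfl | h
    · simp [h, h.not_gt, h.ne]
    · simp
    · simp [h, h.not_gt, h.ne']
  rw [Finset.sum_congr rfl fun w _ => htri w, Finset.sum_add_distrib, Finset.sum_add_distrib,
    ← Finset.sum_filter, ← Finset.sum_filter, ← Finset.sum_filter, hgt, hlt, hlt, hdiag,
    Finset.sum_add_distrib]

/-- The matrix of `X` on `⋀²` in the basis `e_p ⊗ e_q - e_q ⊗ e_p`, `p > q`; it represents
the restriction of `X` when `X` commutes with the swap of the two tensor factors. -/
def wedgeBlock (X : Matrix (Fin n × Fin n) (Fin n × Fin n) R) :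
    Matrix (BialtIndex n) (BialtIndex n) R :=
  fun z w => X z.1 w.1 - X z.1 w.1.swap

theorem wedgeBlock_mul (X : Matrix (Fin n × Fin n) (Fin n × Fin n) R)
    {Y : Matrix (Fin n × Fin n) (Fin n × Fin n) R} (hY : ∀ w w', Y w.swap w'.swap = Y w w') :
    wedgeBlock (X * Y) = wedgeBlock X * wedgeBlock Y := by
  ext z w
  simp only [wedgeBlock, mul_apply, ← Finset.sum_sub_distrib, ← mul_sub]
  rw [sum_prod_fin_eq_sum_bialtIndex]
  have hdiag : ∀ i, Y (i, i) w.1.swap = Y (i, i) w.1 := fun i => by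
    simpa using hY (i, i) w.1
  simp only [hdiag, sub_self, mul_zero, Finset.sum_const_zero, add_zero]
  refine Finset.sum_congr rfl fun u _ => ?_
  have h2 := hY u.1 w.1.swap
  rw [Prod.swap_swap] at h2
  rw [hY u.1 w.1, h2]
  ring

theorem wedgeBlock_one : wedgeBlock (1 : Matrix (Fin n × Fin n) (Fin n × Fin n) R) = 1 := by
  ext z w
  have hswap : z.1 ≠ w.1.swap := fun h => lt_asymm z.2 (by simpa [h] using w.2)
  have hval : z.1 = w.1 ↔ z = w := Subtype.val_injective.eq_iff
  simp only [wedgeBlock, one_apply, hswap, hval, if_false, sub_zero]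

theorem kronecker_self_swap (P : Matrix (Fin n) (Fin n) R) (w w' : Fin n × Fin n) :
    (P ⊗ₖ P) w.swap w'.swap = (P ⊗ₖ P) w w' := by
  simp [kroneckerMap_apply, mul_comm]

def secondCompound : Matrix (Fin n) (Fin n) R →* Matrix (BialtIndex n) (BialtIndex n) R where
  toFun P := wedgeBlock (P ⊗ₖ P)
  map_one' := by rw [one_kronecker_one, wedgeBlock_one]
  map_mul' P Q := by rw [mul_kronecker_mul, wedgeBlock_mul _ (kronecker_self_swap Q)]

def kroneckerSum (A : Matrix (Fin n) (Fin n) R) : Matrix (Fin n × Fin n) (Fin n × Fin n) R :=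
  A ⊗ₖ 1 + 1 ⊗ₖ A

theorem kroneckerSum_swap (A : Matrix (Fin n) (Fin n) R) (w w' : Fin n × Fin n) :
    kroneckerSum A w.swap w'.swap = kroneckerSum A w w' := by
  simp only [kroneckerSum, Matrix.add_apply, kroneckerMap_apply, one_apply, Prod.fst_swap,
    Prod.snd_swap]
  ring

theorem kroneckerSum_conj {A P Q : Matrix (Fin n) (Fin n) R} (hQP : Q * P = 1) :
    kroneckerSum (Q * A * P) = (Q ⊗ₖ Q) * kroneckerSum A * (P ⊗ₖ P) := by
  simp only [kroneckerSum, Matrix.mul_add, Matrix.add_mul, ← mul_kronecker_mul, Matrix.mul_one,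
    hQP]

end Compound

section Bialt

variable {n : ℕ}

theorem wedgeBlock_kroneckerSum (A : Matrix (Fin n) (Fin n) ℂ) :
    wedgeBlock (kroneckerSum A) = bialt A := by
  ext ⟨⟨p, q⟩, hpq⟩ ⟨⟨r, s⟩, hrs⟩
  simp only [wedgeBlock, kroneckerSum, bialt, Matrix.add_apply, kroneckerMap_apply, one_apply,
    Prod.swap_prod_mk]
  dsimp only at hpq hrs
  split_ifs <;> subst_vars <;> first | ring1 | (exfalso; order) | tauto

theorem bialt_conj {A P Q : Matrix (Fin n) (Fin n) ℂ} (hQP : Q * P = 1) :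
    bialt (Q * A * P) = secondCompound Q * bialt A * secondCompound P := by
  rw [← wedgeBlock_kroneckerSum, ← wedgeBlock_kroneckerSum, kroneckerSum_conj hQP,
    wedgeBlock_mul _ (kronecker_self_swap P), wedgeBlock_mul _ (kroneckerSum_swap A)]
  rfl

theorem det_bialt_conj {A P Q : Matrix (Fin n) (Fin n) ℂ} (hQP : Q * P = 1) :
    (bialt (Q * A * P)).det = (bialt A).det := by
  rw [bialt_conj hQP, det_mul_right_comm, ← map_mul, hQP, map_one, one_mul]

instance (n : ℕ) : LinearOrder (BialtIndex n) :=
  LinearOrder.lift' (fun z => toLex z.1) fun _ _ h => Subtype.ext (toLex.injective h)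

theorem bialt_isUpperTriangular_s7 {U : Matrix (Fin n) (Fin n) ℂ} (hU : U.IsUpperTriangular) :
    (bialt U).IsUpperTriangular := by
  rintro ⟨⟨p, q⟩, hpq⟩ ⟨⟨r, s⟩, hrs⟩ hlt
  have hlex : r < p ∨ r = p ∧ s < q := Prod.Lex.lt_iff.mp hlt
  have hU' : ∀ {i j : Fin n}, j < i → U i j = 0 := fun h => hU h
  simp only [bialt]
  split_ifs <;> grind

theorem bialt_apply_self_s7 (U : Matrix (Fin n) (Fin n) ℂ) (z : BialtIndex n) :
    bialt U z z = U z.1.1 z.1.1 + U z.1.2 z.1.2 := by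
  simp [bialt, z.2.ne']

theorem det_bialt_of_isUpperTriangular {U : Matrix (Fin n) (Fin n) ℂ} (hU : U.IsUpperTriangular) :
    (bialt U).det = ∏ z : BialtIndex n, (U z.1.1 z.1.1 + U z.1.2 z.1.2) := by
  rw [det_of_isUpperTriangular (bialt_isUpperTriangular_s7 hU)]
  exact Finset.prod_congr rfl fun z _ => bialt_apply_self_s7 U z

end Bialt

section Pairs

variable {ι α : Type*}

theorem Multiset.erase_map_univ [Fintype ι] [DecidableEq ι] [DecidableEq α] (f : ι → α)
    (p : ι) :
    (Finset.univ.val.map f).erase (f p) = (Finset.univ.erase p).val.map f := by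
  rw [← Multiset.cons_erase (Finset.mem_univ_val p), Multiset.map_cons, Multiset.erase_cons_head,
    Finset.erase_val]

theorem exists_ne_iff_exists_mem_erase [Fintype ι] [DecidableEq α] (f : ι → α)
    (r : α → α → Prop) :
    (∃ p q, p ≠ q ∧ r (f p) (f q)) ↔
      ∃ a ∈ Finset.univ.val.map f, ∃ b ∈ (Finset.univ.val.map f).erase a, r a b := by
  classical
  constructor
  · rintro ⟨p, q, hpq, h⟩
    refine ⟨f p, Multiset.mem_map_of_mem f (Finset.mem_univ_val p), f q, ?_, h⟩
    rw [Multiset.erase_map_univ]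
    exact Multiset.mem_map_of_mem f (Finset.mem_erase.mpr ⟨hpq.symm, Finset.mem_univ q⟩)
  · rintro ⟨_, ha, b, hb, h⟩
    obtain ⟨p, -, rfl⟩ := Multiset.mem_map.mp ha
    rw [Multiset.erase_map_univ] at hb
    obtain ⟨q, hq, rfl⟩ := Multiset.mem_map.mp hb
    exact ⟨p, q, (Finset.ne_of_mem_erase hq).symm, h⟩

variable [LinearOrder ι] [AddCommMagma α] [Zero α]

theorem exists_lt_add_eq_zero_iff_exists_ne (f : ι → α) :
    (∃ p q, q < p ∧ f p + f q = 0) ↔ ∃ p q, p ≠ q ∧ f p + f q = 0 := by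
  constructor
  · rintro ⟨p, q, hqp, h⟩
    exact ⟨p, q, hqp.ne', h⟩
  · rintro ⟨p, q, hpq, h⟩
    rcases hpq.lt_or_gt with hlt | hgt
    · exact ⟨q, p, hlt, by rwa [add_comm]⟩
    · exact ⟨p, q, hgt, h⟩

theorem exists_lt_add_eq_zero_congr [Fintype ι] {f g : ι → α}
    (hfg : Finset.univ.val.map f = Finset.univ.val.map g) :
    (∃ p q, q < p ∧ f p + f q = 0) ↔ ∃ p q, q < p ∧ g p + g q = 0 := by
  classical
  rw [exists_lt_add_eq_zero_iff_exists_ne, exists_lt_add_eq_zero_iff_exists_ne,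
    exists_ne_iff_exists_mem_erase f (fun a b => a + b = 0),
    exists_ne_iff_exists_mem_erase g (fun a b => a + b = 0), hfg]

end Pairs

/-- Let `A` be an `n × n` complex matrix with eigenvalues `μ₁, …, μₙ` counted
with algebraic multiplicity.  The Hopf test function `ψ_H(A) = det (2A ⊙ Iₙ)`
vanishes if and only if `μ_p + μ_q = 0` for some pair of indices `p > q`.
In particular it vanishes whenever `A` has a pair of purely imaginary conjugate
eigenvalues `± i β` (`β` real), and also whenever `A` has a pair of real
eigenvalues of opposite sign and equal modulus, so its vanishing alone does not
certify a pair of purely imaginary complex-conjugate eigenvalues. -/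
theorem bialt_det_eq_zero_iff
    {n : ℕ} (A : Matrix (Fin n) (Fin n) ℂ) (μ : Fin n → ℂ)
    (hroots : A.charpoly.roots = Multiset.map μ (Finset.univ.val : Multiset (Fin n))) :
    ((bialt A).det = 0 ↔ ∃ p q : Fin n, q < p ∧ μ p + μ q = 0) ∧
    (∀ β : ℝ, (∃ p q : Fin n, q < p ∧ μ p = (β : ℂ) * Complex.I ∧
        μ q = -((β : ℂ) * Complex.I)) → (bialt A).det = 0) ∧
    (∀ a : ℝ, (∃ p q : Fin n, q < p ∧ μ p = (a : ℂ) ∧ μ q = -(a : ℂ)) →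
        (bialt A).det = 0) := by
  obtain ⟨P, hU⟩ := Matrix.exists_isUpperTriangular_units_conj A
  set U := P⁻¹.val * A * P.val
  have hdet : (bialt A).det = ∏ z : BialtIndex n, (U z.1.1 z.1.1 + U z.1.2 z.1.2) := by
    rw [← det_bialt_of_isUpperTriangular hU, det_bialt_conj P.inv_mul]
  have hdiag : Finset.univ.val.map U.diag = Finset.univ.val.map μ := by
    rw [← hU.charpoly_roots, charpoly_mul_comm, ← Matrix.mul_assoc, P.mul_inv, Matrix.one_mul,
      hroots]
  have key : (bialt A).det = 0 ↔ ∃ p q : Fin n, q < p ∧ μ p + μ q = 0 := by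
    rw [← exists_lt_add_eq_zero_congr hdiag, hdet, Finset.prod_eq_zero_iff]
    exact ⟨fun ⟨z, _, hz⟩ => ⟨z.1.1, z.1.2, z.2, hz⟩,
      fun ⟨p, q, hqp, h⟩ => ⟨⟨(p, q), hqp⟩, Finset.mem_univ _, h⟩⟩
  refine ⟨key, ?_, ?_⟩
  · rintro β ⟨p, q, hqp, hp, hq⟩
    exact key.mpr ⟨p, q, hqp, by rw [hp, hq, add_neg_cancel]⟩
  · rintro a ⟨p, q, hqp, hp, hq⟩
    exact key.mpr ⟨p, q, hqp, by rw [hp, hq, add_neg_cancel]⟩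
end
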